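/- arXiv:0911.1038 — 3 statements merged into one kernel-verified Lean document; each statement's English description precedes it below -/
import Mathlib

section
/- For every partition λ (with parts ≥ 1), the formal power series P_λ(t) lies in the ℚ-linear span of the set of series E(p_1,…,p_l) with l ≥ 1 and p_1,…,p_l ≥ 0, i.e. P_λ is a finite ℚ-linear combination of expressions of the form C(t)^{p_1} D C(t)^{p_2} ⋯ D C(t)^{p_l}. -/
noncomputable section

/-- The base ring `A = ℚ[R₂, R₃, …]`: the polynomial ring over `ℚ` in countably many
variables, where the variable of index `i` stands for the free cumulant `Rᵢ`
(only the variables of index `≥ 2` are ever used). -/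
abbrev A : Type := MvPolynomial ℕ ℚ

/-- The set of partitions of `n` all of whose parts are at least `2`. -/
def P2 (n : ℕ) : Finset (Nat.Partition n) :=
  Finset.univ.filter fun μ => ∀ i ∈ μ.parts, 2 ≤ i

/-- `𝓡_μ = ∏_{i≥2} ((i−1)Rᵢ)^{mᵢ(μ)}/mᵢ(μ)!`, for `m` the multiset of parts of `μ`. -/
def Rmu (m : Multiset ℕ) : A :=
  (∏ i ∈ m.toFinset, ((m.count i).factorial : ℚ))⁻¹ •
    (m.map fun i : ℕ => (MvPolynomial.C ((i : ℚ) - 1) : A) * MvPolynomial.X i).prod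

/-- `Q_i = Σ_{|μ|=i} (l(μ)−1)! 𝓡_μ`, the sum ranging over partitions of `i`
with all parts `≥ 2`. -/
def Qpol (i : ℕ) : A :=
  ∑ μ ∈ P2 i, ((μ.parts.card - 1).factorial : ℚ) • Rmu μ.parts

/-- `𝓠_μ = ∏_{i≥2} Q_i^{mᵢ(μ)}/mᵢ(μ)!`, for `m` the multiset of parts of `μ`. -/
def Qmu (m : Multiset ℕ) : A :=
  (∏ i ∈ m.toFinset, ((m.count i).factorial : ℚ))⁻¹ • (m.map Qpol).prod

/-- The power series `S(t) = Σ_{i≥2} (i−1) Rᵢ tⁱ ∈ A[[t]]`. -/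
def Sser : PowerSeries A :=
  PowerSeries.mk fun i =>
    if 2 ≤ i then (MvPolynomial.C ((i : ℚ) - 1) : A) * MvPolynomial.X i else 0

/-- `C(t) = (1 − Σ_{i≥2}(i−1)Rᵢ tⁱ)⁻¹ ∈ A[[t]]`; the inverse exists (and is computed by
`PowerSeries.invOfUnit` with unit `1`) since the constant term of `1 - S` is `1`. -/
def Cser : PowerSeries A := PowerSeries.invOfUnit (1 - Sser) 1

/-- `C(t)⁻¹ = 1 − Σ_{i≥2}(i−1)Rᵢ tⁱ`. -/
def CserInv : PowerSeries A := 1 - Sser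

/-- The operator `D = t·d/dt` on `A[[t]]`, sending `Σ aₖ tᵏ` to `Σ k·aₖ tᵏ`. -/
def Dop (F : PowerSeries A) : PowerSeries A :=
  PowerSeries.mk fun k => (k : A) * PowerSeries.coeff k F

/-- `A₁(t) = C(t)` and `A_m(t) = C(t)·(D + (m−2)) A_{m−1}(t)` for `m ≥ 2`
(the value at `0` is irrelevant). -/
def Aser : ℕ → PowerSeries A
  | 0 => 1
  | 1 => Cser
  | (m + 2) => Cser * (Dop (Aser (m + 1)) + (m : PowerSeries A) * Aser (m + 1))

/-- `P_m(t) = −A_m(t)/m!`. -/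
def Pser (m : ℕ) : PowerSeries A := (-(m.factorial : ℚ)⁻¹) • Aser m

/-- `P_λ(t) = ∏_j P_{λ_j}(t)`, for `m` the multiset of parts of `λ`. -/
def Plam (m : Multiset ℕ) : PowerSeries A := (m.map Pser).prod

/-- Evaluation of the monomial symmetric function `m_lam` at the finitely many values
given by the multiset `μ` (and `0` elsewhere):
`m_lam(x) = (∏_j m_j(lam)!)⁻¹ Σ_{φ injective} ∏_i x_{φ(i)}^{lam_i}`. -/
def msymEval (lam : Multiset ℕ) (μ : Multiset ℕ) : ℚ :=
  (∏ j ∈ lam.toFinset, ((lam.count j).factorial : ℚ))⁻¹ *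
    ∑ φ ∈ Finset.univ.filter
        (fun φ : Fin lam.toList.length → Fin μ.toList.length => Function.Injective φ),
      ∏ i, ((μ.toList.get (φ i) : ℕ) : ℚ) ^ lam.toList.get i

/-- `f : Multiset ℕ → ℚ` is (the evaluation, at the multiset of parts of a partition, of)
a symmetric function of degree at most `d` with rational coefficients: a finite `ℚ`-linear
combination of monomial symmetric functions `m_lam` over partitions `lam` with `|lam| ≤ d`. -/
def IsSymmFunc (d : ℕ) (f : Multiset ℕ → ℚ) : Prop :=
  ∃ c : Multiset ℕ →₀ ℚ,
    (∀ lam ∈ c.support, (∀ i ∈ lam, 1 ≤ i) ∧ lam.sum ≤ d) ∧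
    ∀ μ : Multiset ℕ, f μ = ∑ lam ∈ c.support, c lam * msymEval lam μ

/-- `m̂_lam(k)`: the evaluation of the monomial symmetric function `m_lam` at
`x_i = i` for `1 ≤ i ≤ k−1` and `x_i = 0` for `i ≥ k`. -/
def mhat (lam : Multiset ℕ) (k : ℕ) : ℚ :=
  msymEval lam ((Multiset.range (k - 1)).map fun i => i + 1)

/-- `Σ_{k,k+1−2g} = −(1/k)·[t^{k+1−2g}] Σ_{λ ⊢ 2g} m̂_λ(k)·P_λ(t)·C(t)⁻¹ ∈ A`:
by the theorem of Goulden and Rattan this is the homogeneous part of degree `k+1−2g`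
of the Kerov character polynomial `K_k`. -/
def SigmaGR (g k : ℕ) : A :=
  (-(k : ℚ)⁻¹) • PowerSeries.coeff (k + 1 - 2 * g)
    (∑ lam : Nat.Partition (2 * g), mhat lam.parts k • (Plam lam.parts * CserInv))

/-- The nice series of parameter `s` (paper: genus `g` with `s = 2g`) associated with `f`:
`F(t) = Σ_{k≥0} tᵏ Σ_{|μ|=k} (l(μ)+s−2)! f(μ) 𝓡_μ`. -/
def niceSeries (s : ℕ) (f : Multiset ℕ → ℚ) : PowerSeries A :=
  PowerSeries.mk fun k => ∑ μ ∈ P2 k,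
    (((μ.parts.card + s - 2).factorial : ℚ) * f μ.parts) • Rmu μ.parts

/-- The very nice series of parameter `s` (paper: genus `g` with `s = 2g`) associated with
`f`: `F(t) = Σ_{k≥0} tᵏ Σ_{|μ|=k} (s−1)^{l(μ)} f(μ) 𝓠_μ`. -/
def veryNiceSeries (s : ℕ) (f : Multiset ℕ → ℚ) : PowerSeries A :=
  PowerSeries.mk fun k => ∑ μ ∈ P2 k,
    ((((s - 1 : ℕ) : ℚ)) ^ μ.parts.card * f μ.parts) • Qmu μ.parts


/-- `E(p_1,…,p_l) = C^{p_1}·D(C^{p_2}·D(⋯ D(C^{p_l})⋯))`, each `D` acting on everything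
to its right (the value on the empty list is irrelevant). -/
def Eser : List ℕ → PowerSeries A
  | [] => 1
  | [p] => Cser ^ p
  | p :: q :: r => Cser ^ p * Dop (Eser (q :: r))

/-!
The span of the series `E(l)` contains `1 = E(0)` and `C = E(1)`, and it is stable under `D`
(`D E(l) = E(0, l)`) and under multiplication by powers of `C` (which add to the first entry).
It is also closed under products: by the Leibniz rule for `D`,
`E(p, a, …) · E(q, b, …) = C^{p+q} (D(X · DY) − X · D²Y)` with `X = E(a, …)`, `Y = E(b, …)`,
which shortens the first factor. So the span is a subalgebra stable under `D` and containing `C`;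
the recursion for `A_m` then stays inside it, and so do the products `P_λ`.
-/

def Espan : Submodule ℚ (PowerSeries A) :=
  Submodule.span ℚ {F : PowerSeries A | ∃ l : List ℕ, l ≠ [] ∧ F = Eser l}

lemma Eser_mem_Espan {l : List ℕ} (h : l ≠ []) : Eser l ∈ Espan :=
  Submodule.subset_span ⟨l, h, rfl⟩

lemma one_mem_Espan : 1 ∈ Espan := by
  simpa [Eser] using Eser_mem_Espan (l := [0]) (List.cons_ne_nil _ _)

lemma Cser_mem_Espan : Cser ∈ Espan := by
  simpa [Eser] using Eser_mem_Espan (l := [1]) (List.cons_ne_nil _ _)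

lemma Dop_mul (F G : PowerSeries A) : Dop (F * G) = Dop F * G + F * Dop G := by
  ext k : 1
  simp only [Dop, PowerSeries.coeff_mk, map_add, PowerSeries.coeff_mul, Finset.mul_sum,
    ← Finset.sum_add_distrib]
  apply Finset.sum_congr rfl
  intro ij hij
  rw [Finset.HasAntidiagonal.mem_antidiagonal] at hij
  subst hij
  push_cast
  ring

lemma Dop_mul_Dop (F G : PowerSeries A) :
    Dop F * Dop G = Dop (F * Dop G) - F * Dop (Dop G) := by
  rw [Dop_mul]
  ring

def Dop.linearMap : PowerSeries A →ₗ[ℚ] PowerSeries A where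
  toFun := Dop
  map_add' F G := by ext k : 1; simp [Dop, mul_add]
  map_smul' c F := by ext k : 1; simp [Dop, Algebra.mul_smul_comm]

lemma Dop_Eser {l : List ℕ} (h : l ≠ []) : Dop (Eser l) = Eser (0 :: l) := by
  match l with
  | [_] => simp [Eser]
  | _ :: _ :: _ => simp [Eser]

lemma Cser_pow_mul_Eser (p q : ℕ) (r : List ℕ) :
    Cser ^ p * Eser (q :: r) = Eser ((p + q) :: r) := by
  match r with
  | [] => simp [Eser, pow_add]
  | _ :: _ => simp [Eser, pow_add, mul_assoc]

lemma Dop_mem_Espan {F : PowerSeries A} (hF : F ∈ Espan) : Dop F ∈ Espan := by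
  have : Espan ≤ Espan.comap Dop.linearMap := Submodule.span_le.mpr <| by
    rintro _ ⟨l, hl, rfl⟩
    change Dop (Eser l) ∈ Espan
    rw [Dop_Eser hl]
    exact Eser_mem_Espan (List.cons_ne_nil 0 l)
  exact this hF

lemma Cser_pow_mul_mem_Espan (p : ℕ) {F : PowerSeries A} (hF : F ∈ Espan) :
    Cser ^ p * F ∈ Espan := by
  have : Espan ≤ Espan.comap (LinearMap.mulLeft ℚ (Cser ^ p)) := Submodule.span_le.mpr <| by
    rintro _ ⟨l, hl, rfl⟩
    obtain ⟨q, r, rfl⟩ := List.exists_cons_of_ne_nil hl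
    change Cser ^ p * Eser (q :: r) ∈ Espan
    rw [Cser_pow_mul_Eser]
    exact Eser_mem_Espan (List.cons_ne_nil _ r)
  exact this hF

lemma Eser_mul_Eser_mem_Espan (p : ℕ) (r : List ℕ) {l : List ℕ} (hl : l ≠ []) :
    Eser (p :: r) * Eser l ∈ Espan := by
  induction r generalizing p l with
  | nil => exact Cser_pow_mul_mem_Espan p (Eser_mem_Espan hl)
  | cons a r ih =>
    match l with
    | [q] =>
      rw [mul_comm, show Eser [q] = Cser ^ q from rfl]
      exact Cser_pow_mul_mem_Espan q (Eser_mem_Espan (List.cons_ne_nil _ _))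
    | q :: b :: s =>
      change Cser ^ p * Dop (Eser (a :: r)) * (Cser ^ q * Dop (Eser (b :: s))) ∈ Espan
      have hDY : Dop (Eser (b :: s)) = Eser (0 :: b :: s) := Dop_Eser (List.cons_ne_nil _ _)
      have hDDY : Dop (Eser (0 :: b :: s)) = Eser (0 :: 0 :: b :: s) :=
        Dop_Eser (List.cons_ne_nil _ _)
      rw [mul_mul_mul_comm, ← pow_add, Dop_mul_Dop, hDY, hDDY]
      exact Cser_pow_mul_mem_Espan _ <| Submodule.sub_mem _
        (Dop_mem_Espan (ih a (List.cons_ne_nil _ _))) (ih a (List.cons_ne_nil _ _))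

lemma mul_mem_Espan {F G : PowerSeries A} (hF : F ∈ Espan) (hG : G ∈ Espan) :
    F * G ∈ Espan := by
  have : Espan * Espan ≤ Espan := by
    rw [Espan, Submodule.span_mul_span, Submodule.span_le]
    rintro _ ⟨_, ⟨k, hk, rfl⟩, _, ⟨l, hl, rfl⟩, rfl⟩
    obtain ⟨p, r, rfl⟩ := List.exists_cons_of_ne_nil hk
    exact Eser_mul_Eser_mem_Espan p r hl
  exact this (Submodule.mul_mem_mul hF hG)

def Esubalgebra : Subalgebra ℚ (PowerSeries A) :=
  Espan.toSubalgebra one_mem_Espan fun _ _ => mul_mem_Espan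

lemma Aser_mem_Esubalgebra : ∀ m : ℕ, Aser m ∈ Esubalgebra
  | 0 => Esubalgebra.one_mem
  | 1 => Cser_mem_Espan
  | k + 2 =>
    have hA := Aser_mem_Esubalgebra (k + 1)
    Esubalgebra.mul_mem Cser_mem_Espan <|
      Esubalgebra.add_mem (Dop_mem_Espan hA) (Esubalgebra.mul_mem (Esubalgebra.natCast_mem k) hA)

/-- For every partition `λ`, `P_λ(t)` lies in the `ℚ`-linear span of the series
`E(p_1,…,p_l) = C^{p_1} D C^{p_2} ⋯ D C^{p_l}` with `l ≥ 1` and `p_1,…,p_l ≥ 0`. -/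
theorem Plam_mem_span (n : ℕ) (lam : Nat.Partition n) :
    Plam lam.parts ∈ Submodule.span ℚ
      {F : PowerSeries A | ∃ l : List ℕ, l ≠ [] ∧ F = Eser l} := by
  refine Esubalgebra.multiset_prod_mem fun P hP => ?_
  obtain ⟨m, -, rfl⟩ := Multiset.mem_map.mp hP
  exact Esubalgebra.smul_mem (Aser_mem_Esubalgebra m) _

end
end

section
/- Let s ≥ 2 be an integer and let F(t) = Σ_{k≥0} t^k Σ_{|μ|=k}(l(μ)+s−2)! f(μ) 𝓡_μ be the nice series of parameter s associated with a symmetric function f of degree at most d. Then there exists a symmetric function f' of degree at most d such that C(t)·F(t) equals the nice series of parameter s+1 associated with f' (i.e. multiplication by C(t) raises the genus by 1/2 while not increasing the degree). -/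
noncomputable section

/-! Since `C(t)⁻¹ = 1 − S(t)` with `S(t) = Σ_{i≥2} (i−1)Rᵢ tⁱ`, the claim `C·F = G` is equivalent
to `G = F + S·G`. Comparing coefficients of `𝓡_μ` and using `(i−1)Rᵢ · 𝓡_{μ∖i} = mᵢ(μ) 𝓡_μ`,
this becomes the recursion `(l(μ) + s − 1) f'(μ) = f(μ) + Σ_{i∈μ} mᵢ(μ) f'(μ∖i)`. For `f = m_λ`
it is solved by `f' = m_λ / (l(λ) + s − 1)`, thanks to the identity
`Σ_{i∈μ} mᵢ(μ) m_λ(μ∖i) = (l(μ) − l(λ)) m_λ(μ)`: an injection of the parts of `λ` into the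
parts of `μ` misses exactly `l(μ) − l(λ)` of them. -/

open Finset

theorem Fintype.exists_equiv_of_map_univ_eq {α β γ : Type*} [Fintype α] [Fintype β]
    [DecidableEq γ] {f : α → γ} {g : β → γ} (h : univ.val.map f = univ.val.map g) :
    ∃ σ : α ≃ β, ∀ a, g (σ a) = f a := by
  classical
  have hfiber : ∀ c, Fintype.card {a // f a = c} = Fintype.card {b // g b = c} := by
    intro c
    have := congrArg (Multiset.count c) h
    simp only [Multiset.count_map, eq_comm (a := c)] at this
    simp only [Fintype.card_subtype, card_def, filter_val]
    exact this
  exact ⟨Equiv.ofFiberEquiv fun c => Fintype.equivOfCardEq (hfiber c),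
    Equiv.ofFiberEquiv_map _⟩

theorem Fin.map_univ_val_succAbove {α : Type*} {n : ℕ} (g : Fin (n + 1) → α) (q : Fin (n + 1)) :
    univ.val.map g = g q ::ₘ univ.val.map (g ∘ q.succAbove) := by
  rw [Fin.univ_succAbove _ q]
  simp [Function.comp_def]

def injSum {r n : ℕ} (e : Fin r → ℕ) (g : Fin n → ℕ) : ℚ :=
  ∑ φ ∈ univ.filter (fun φ : Fin r → Fin n => Function.Injective φ),
    ∏ i, ((g (φ i) : ℕ) : ℚ) ^ e i

section injSum

variable {r n m : ℕ} (e : Fin r → ℕ)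

theorem injSum_comp_equiv (g : Fin m → ℕ) (σ : Fin n ≃ Fin m) :
    injSum e (g ∘ σ) = injSum e g :=
  sum_nbij' (fun φ => σ ∘ φ) (fun ψ => σ.symm ∘ ψ)
    (by simp [σ.injective.of_comp_iff]) (by simp [σ.symm.injective.of_comp_iff])
    (fun φ _ => by ext; simp) (fun ψ _ => by ext; simp) (fun φ _ => rfl)

theorem injSum_eq_of_map_univ_eq {g : Fin n → ℕ} {g' : Fin m → ℕ}
    (h : univ.val.map g = univ.val.map g') : injSum e g = injSum e g' := by
  obtain ⟨σ, hσ⟩ := Fintype.exists_equiv_of_map_univ_eq h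
  rw [← injSum_comp_equiv e g' σ]
  exact congrArg _ (funext fun a => (hσ a).symm)

theorem injSum_comp_succAbove (g : Fin (n + 1) → ℕ) (q : Fin (n + 1)) :
    injSum e (g ∘ q.succAbove) = ∑ φ ∈ univ.filter
      (fun φ : Fin r → Fin (n + 1) => Function.Injective φ ∧ ∀ i, φ i ≠ q),
      ∏ i, ((g (φ i) : ℕ) : ℚ) ^ e i := by
  refine sum_bij (fun ψ _ => q.succAbove ∘ ψ) ?_ ?_ ?_ (fun _ _ => rfl)
  · intro ψ hψ
    simp only [mem_filter, mem_univ, true_and] at hψ ⊢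
    exact ⟨Fin.succAbove_right_injective.comp hψ, fun i => Fin.succAbove_ne q (ψ i)⟩
  · intro ψ₁ _ ψ₂ _ h
    exact funext fun i => Fin.succAbove_right_injective (congrFun h i)
  · intro φ hφ
    simp only [mem_filter, mem_univ, true_and] at hφ
    choose ψ hψ using fun i => Fin.exists_succAbove_eq (hφ.2 i)
    refine ⟨ψ, ?_, funext hψ⟩
    simp only [mem_filter, mem_univ, true_and]
    intro i j hij
    exact hφ.1 (by rw [← hψ i, ← hψ j, hij])

theorem sum_injSum_comp_succAbove (g : Fin (n + 1) → ℕ) :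
    ∑ q : Fin (n + 1), injSum e (g ∘ q.succAbove) = ((n + 1 : ℚ) - r) * injSum e g := by
  simp_rw [injSum_comp_succAbove]
  rw [sum_comm' (t' := univ.filter fun φ : Fin r → Fin (n + 1) => Function.Injective φ)
    (s' := fun φ => univ.filter fun q => ∀ i, φ i ≠ q) (by intros; simp; tauto), injSum,
    mul_sum]
  refine sum_congr rfl fun φ hφ => ?_
  have hφ : Function.Injective φ := (mem_filter.mp hφ).2
  have hmiss : univ.filter (fun q => ∀ i, φ i ≠ q) = (univ.image φ)ᶜ := by
    ext q; simp
  have hr : r ≤ n + 1 := by simpa using Fintype.card_le_of_injective φ hφ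
  rw [sum_const, hmiss, card_compl, card_image_of_injective _ hφ, nsmul_eq_mul]
  simp [Nat.cast_sub hr]

end injSum

theorem msymEval_eq_injSum (lam : Multiset ℕ) {n : ℕ} (g : Fin n → ℕ) :
    msymEval lam (univ.val.map g) = (∏ j ∈ lam.toFinset, ((lam.count j).factorial : ℚ))⁻¹ *
      injSum lam.toList.get g := by
  refine congrArg _ (injSum_eq_of_map_univ_eq _ ?_)
  rw [Fin.univ_val_map, List.ofFn_get, Multiset.coe_toList]

theorem sum_msymEval_map_succAbove (lam : Multiset ℕ) {n : ℕ} (g : Fin (n + 1) → ℕ) :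
    ∑ q : Fin (n + 1), msymEval lam (univ.val.map (g ∘ q.succAbove))
      = ((n + 1 : ℚ) - Multiset.card lam) * msymEval lam (univ.val.map g) := by
  simp_rw [msymEval_eq_injSum, ← mul_sum, sum_injSum_comp_succAbove, Multiset.length_toList]
  ring

theorem sum_count_mul_msymEval_erase (lam p : Multiset ℕ) :
    ∑ i ∈ p.toFinset, (p.count i : ℚ) * msymEval lam (p.erase i)
      = ((Multiset.card p : ℚ) - Multiset.card lam) * msymEval lam p := by
  rw [← Multiset.coe_toList p]
  cases p.toList with
  | nil =>
    rcases Multiset.empty_or_exists_mem lam with rfl | ⟨a, ha⟩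
    · simp
    · have : Nonempty (Fin lam.toList.length) :=
        ⟨⟨0, by simpa using Multiset.card_pos_iff_exists_mem.mpr ⟨a, ha⟩⟩⟩
      have h0 : (0 : Multiset ℕ) = univ.val.map (Fin.elim0 : Fin 0 → ℕ) := by simp
      have hz : msymEval lam 0 = 0 := by
        rw [h0, msymEval_eq_injSum, injSum, sum_eq_zero fun φ _ => (φ this.some).elim0, mul_zero]
      simp [hz]
  | cons a t =>
    have hg : ((a :: t : List ℕ) : Multiset ℕ) = univ.val.map (a :: t).get := by
      rw [Fin.univ_val_map, List.ofFn_get]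
    rw [hg]
    calc ∑ i ∈ (univ.val.map (a :: t).get).toFinset, _
        = ∑ q, msymEval lam ((univ.val.map (a :: t).get).erase ((a :: t).get q)) := by
          simp_rw [← nsmul_eq_mul, ← sum_multiset_map_count, Multiset.map_map]
          rfl
      _ = ∑ q, msymEval lam (univ.val.map ((a :: t).get ∘ q.succAbove)) :=
          sum_congr rfl fun q _ => by
            rw [Fin.map_univ_val_succAbove _ q, Multiset.erase_cons_head]
      _ = _ := by
          refine (sum_msymEval_map_succAbove lam (n := t.length) (a :: t).get).trans ?_
          simp

theorem IsSymmFunc.exists_card_add_mul_eq_add_sum_erase {d : ℕ} {f : Multiset ℕ → ℚ}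
    (hf : IsSymmFunc d f) {a : ℚ} (ha : 0 < a) :
    ∃ f' : Multiset ℕ → ℚ, IsSymmFunc d f' ∧ ∀ p : Multiset ℕ,
      ((Multiset.card p : ℚ) + a) * f' p
        = f p + ∑ i ∈ p.toFinset, (p.count i : ℚ) * f' (p.erase i) := by
  obtain ⟨c, hc, hfc⟩ := hf
  have hne : ∀ lam : Multiset ℕ, (Multiset.card lam : ℚ) + a ≠ 0 := fun _ => by positivity
  refine ⟨fun μ => ∑ lam ∈ c.support, c lam / (Multiset.card lam + a) * msymEval lam μ,
    ⟨⟨c.support, fun lam => c lam / (Multiset.card lam + a), fun lam => by simp [hne lam]⟩,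
      hc, fun _ => rfl⟩, fun p => ?_⟩
  have herase : ∑ i ∈ p.toFinset, (p.count i : ℚ) *
        ∑ lam ∈ c.support, c lam / (Multiset.card lam + a) * msymEval lam (p.erase i)
      = ∑ lam ∈ c.support, c lam / (Multiset.card lam + a) *
          (((Multiset.card p : ℚ) - Multiset.card lam) * msymEval lam p) := by
    simp_rw [← sum_count_mul_msymEval_erase, mul_sum]
    rw [sum_comm]
    exact sum_congr rfl fun _ _ => sum_congr rfl fun _ _ => by ring
  rw [herase, hfc, mul_sum, ← sum_add_distrib]
  refine sum_congr rfl fun lam _ => ?_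
  field_simp [hne lam]
  ring

theorem Multiset.prod_factorial_count_cons {α : Type*} [DecidableEq α] (i : α)
    (m : Multiset α) :
    ∏ j ∈ (i ::ₘ m).toFinset, ((i ::ₘ m).count j).factorial
      = (m.count i + 1) * ∏ j ∈ m.toFinset, (m.count j).factorial := by
  have hi : i ∈ (i ::ₘ m).toFinset := by simp
  have hsub : m.toFinset ⊆ (i ::ₘ m).toFinset := by simp [subset_insert]
  have hext : ∏ j ∈ m.toFinset, (m.count j).factorial
      = ∏ j ∈ (i ::ₘ m).toFinset, (m.count j).factorial :=
    prod_subset hsub fun j _ hj => by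
      rw [Multiset.count_eq_zero.mpr (by simpa using hj), Nat.factorial_zero]
  rw [hext, ← mul_prod_erase _ _ hi, ← mul_prod_erase _ (fun j => (m.count j).factorial) hi,
    Multiset.count_cons_self, Nat.factorial_succ,
    prod_congr rfl fun j hj => by rw [Multiset.count_cons_of_ne (ne_of_mem_erase hj)]]
  ring

def weightedR (i : ℕ) : A := MvPolynomial.C ((i : ℚ) - 1) * MvPolynomial.X i

theorem coeff_Sser (i : ℕ) :
    PowerSeries.coeff i Sser = if 2 ≤ i then weightedR i else 0 := by
  rw [Sser, PowerSeries.coeff_mk]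
  rfl

theorem constantCoeff_Sser : PowerSeries.constantCoeff Sser = 0 := by
  rw [← PowerSeries.coeff_zero_eq_constantCoeff_apply, coeff_Sser, if_neg (by norm_num)]

theorem Cser_mul_eq_of_eq_add {F G : PowerSeries A} (h : G = F + Sser * G) : Cser * F = G := by
  have hinv : (1 - Sser) * Cser = 1 :=
    PowerSeries.mul_invOfUnit _ _ (by simp [constantCoeff_Sser])
  calc Cser * F = ((1 - Sser) * Cser) * G := by linear_combination -Cser * h
    _ = G := by rw [hinv, one_mul]

theorem weightedR_mul_Rmu_erase {p : Multiset ℕ} {i : ℕ} (hi : i ∈ p) :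
    weightedR i * Rmu (p.erase i) = (p.count i : ℚ) • Rmu p := by
  obtain ⟨m, rfl⟩ := Multiset.exists_cons_of_mem hi
  rw [Multiset.erase_cons_head, Multiset.count_cons_self]
  have hpos : ((m.count i : ℚ) + 1) ≠ 0 := by positivity
  simp only [Rmu, Multiset.map_cons, Multiset.prod_cons, ← Nat.cast_prod,
    Multiset.prod_factorial_count_cons, mul_smul_comm, smul_smul]
  push_cast
  congr 1
  field_simp

def parts2 (k : ℕ) : Finset (Multiset ℕ) := (P2 k).image Nat.Partition.parts

theorem mem_parts2 {k : ℕ} {m : Multiset ℕ} :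
    m ∈ parts2 k ↔ (∀ i ∈ m, 2 ≤ i) ∧ m.sum = k := by
  constructor
  · intro hm
    obtain ⟨μ, hμ, rfl⟩ := mem_image.mp hm
    exact ⟨(mem_filter.mp hμ).2, μ.parts_sum⟩
  · rintro ⟨h2, hsum⟩
    exact mem_image.mpr ⟨⟨m, fun hi => by have := h2 _ hi; omega, hsum⟩,
      mem_filter.mpr ⟨mem_univ _, h2⟩, rfl⟩

theorem sum_parts2_sub_eq_sum_erase {M : Type*} [AddCommMonoid M] {i k : ℕ} (hi : 2 ≤ i)
    (hik : i ≤ k) (ψ : Multiset ℕ → M) :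
    ∑ m ∈ parts2 (k - i), ψ m = ∑ p ∈ (parts2 k).filter (i ∈ ·), ψ (p.erase i) := by
  refine sum_nbij' (i ::ₘ ·) (·.erase i) ?_ ?_ (fun m _ => Multiset.erase_cons_head i m) ?_
    (fun m _ => by rw [Multiset.erase_cons_head])
  · intro m hm
    obtain ⟨h2, hsum⟩ := mem_parts2.mp hm
    simp only [mem_filter, mem_parts2, Multiset.mem_cons, Multiset.sum_cons, true_or, and_true]
    exact ⟨fun j hj => hj.elim (· ▸ hi) (h2 j), by omega⟩
  · intro p hp
    obtain ⟨hp, hip⟩ := mem_filter.mp hp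
    obtain ⟨h2, hsum⟩ := mem_parts2.mp hp
    have hsplit := Multiset.sum_erase hip
    exact mem_parts2.mpr ⟨fun j hj => h2 j (Multiset.mem_of_mem_erase hj), by omega⟩
  · intro p hp
    exact Multiset.cons_erase (mem_filter.mp hp).2

theorem coeff_niceSeries (s : ℕ) (f : Multiset ℕ → ℚ) (k : ℕ) :
    PowerSeries.coeff k (niceSeries s f)
      = ∑ m ∈ parts2 k, (((Multiset.card m + s - 2).factorial : ℚ) * f m) • Rmu m := by
  rw [niceSeries, PowerSeries.coeff_mk, parts2, sum_image fun _ _ _ _ h => Nat.Partition.ext h]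

theorem coeff_Sser_mul_mk (φ : Multiset ℕ → A) (k : ℕ) :
    PowerSeries.coeff k (Sser * PowerSeries.mk fun j => ∑ m ∈ parts2 j, φ m)
      = ∑ p ∈ parts2 k, ∑ i ∈ p.toFinset, weightedR i * φ (p.erase i) := by
  have hterm : ∀ i ∈ range (k + 1),
      (if 2 ≤ i then weightedR i else 0) * ∑ m ∈ parts2 (k - i), φ m
        = ∑ p ∈ (parts2 k).filter (i ∈ ·), weightedR i * φ (p.erase i) := by
    intro i hik
    split_ifs with hi
    · rw [mul_sum, sum_parts2_sub_eq_sum_erase hi (by simpa [Nat.lt_succ_iff] using hik)]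
    · refine (zero_mul _).trans (sum_eq_zero fun p hp => ?_).symm
      obtain ⟨hp, hip⟩ := mem_filter.mp hp
      exact absurd ((mem_parts2.mp hp).1 i hip) hi
  rw [PowerSeries.coeff_mul, Nat.sum_antidiagonal_eq_sum_range_succ_mk]
  simp only [coeff_Sser, PowerSeries.coeff_mk]
  rw [sum_congr rfl hterm]
  refine sum_comm' fun i p => ?_
  simp only [mem_range, mem_filter, Multiset.mem_toFinset, Nat.lt_succ_iff]
  constructor
  · exact fun ⟨_, hp, hip⟩ => ⟨hip, hp⟩
  · exact fun ⟨hip, hp⟩ => ⟨(mem_parts2.mp hp).2 ▸ Multiset.le_sum_of_mem hip, hp, hip⟩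

theorem niceSeries_succ_eq_add {s : ℕ} (hs : 2 ≤ s) {f f' : Multiset ℕ → ℚ}
    (h : ∀ p : Multiset ℕ, ((Multiset.card p : ℚ) + (s - 1)) * f' p
      = f p + ∑ i ∈ p.toFinset, (p.count i : ℚ) * f' (p.erase i)) :
    niceSeries (s + 1) f' = niceSeries s f + Sser * niceSeries (s + 1) f' := by
  have hG : niceSeries (s + 1) f' = PowerSeries.mk fun j =>
      ∑ m ∈ parts2 j, (((Multiset.card m + s - 1).factorial : ℚ) * f' m) • Rmu m := by
    refine PowerSeries.ext fun j => ?_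
    rw [coeff_niceSeries, PowerSeries.coeff_mk]
    simp only [show ∀ n, n + (s + 1) - 2 = n + s - 1 by omega]
  refine PowerSeries.ext fun k => ?_
  rw [hG, PowerSeries.coeff_mk, map_add, coeff_niceSeries, coeff_Sser_mul_mk,
    ← sum_add_distrib]
  refine sum_congr rfl fun p _ => ?_
  have hterm : ∀ i ∈ p.toFinset, weightedR i *
      ((((Multiset.card (p.erase i) + s - 1).factorial : ℚ) * f' (p.erase i)) • Rmu (p.erase i))
        = (((Multiset.card p + s - 2).factorial : ℚ) * ((p.count i : ℚ) * f' (p.erase i)))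
          • Rmu p := by
    intro i hi
    have hi := Multiset.mem_toFinset.mp hi
    have hcard := Multiset.card_pos_iff_exists_mem.mpr ⟨i, hi⟩
    rw [mul_smul_comm, weightedR_mul_Rmu_erase hi, smul_smul, Multiset.card_erase_of_mem hi,
      Nat.pred_eq_sub_one, show Multiset.card p - 1 + s - 1 = Multiset.card p + s - 2 by omega]
    congr 1
    ring
  rw [sum_congr rfl hterm, ← sum_smul, ← add_smul, ← mul_sum, ← mul_add, ← h p,
    show Multiset.card p + s - 1 = (Multiset.card p + s - 2) + 1 by omega, Nat.factorial_succ]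
  push_cast [show 2 ≤ Multiset.card p + s by omega]
  congr 1
  ring

/-- Lemma 2.3 (c), nice case: if `F` is the nice series of parameter `s` associated with a
symmetric function `f` of degree at most `d`, then `C(t)·F(t)` is the nice series of
parameter `s+1` associated with some symmetric function `f'` of degree at most `d`. -/
theorem C_mul_nice (s d : ℕ) (hs : 2 ≤ s) (f : Multiset ℕ → ℚ) (hf : IsSymmFunc d f) :
    ∃ f' : Multiset ℕ → ℚ, IsSymmFunc d f' ∧
      Cser * niceSeries s f = niceSeries (s + 1) f' := by
  have ha : (0 : ℚ) < s - 1 := by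
    have : (2 : ℚ) ≤ s := by exact_mod_cast hs
    linarith
  obtain ⟨f', hf', hrec⟩ := hf.exists_card_add_mul_eq_add_sum_erase ha
  exact ⟨f', hf', Cser_mul_eq_of_eq_add (niceSeries_succ_eq_add hs hrec)⟩
end
end

section
/- Let p be an odd prime. Then for every finitely supported function s : {2,3,…} → ℕ, the integer N_p(s) − [s = e_{p+1}] + 2·[s = e_2] is nonnegative and divisible by p (here [·] equals 1 when the condition holds and 0 otherwise). Equivalently, (Σ_p − R_{p+1} + 2R_2)/p is a polynomial in the free cumulants R_2, R_3, … with nonnegative integer coefficients. -/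
/-!
The long cycle `c = (1 2 … p)` generates a group of order `p`, which acts on the triples counted
by `N_p(s)` by simultaneous conjugation, the colors being carried along with the cycles of `σ₂`;
conjugation by `c` fixes `c`, so the defining conditions are preserved. Hence `N_p(s)` is
congruent mod `p` to the number of fixed triples, and it is at least that number. In a fixed
triple `σ₂` commutes with the `p`-cycle `c`, so it is a power of `c` and `σ₁ = c σ₂⁻¹`; since `p`
is prime, every nontrivial power of `c` is again a `p`-cycle. Now `σ₂ = 1` contradicts the cycle
count, `σ₂ = c` gives the only fixed triple, for `s = e_{p+1}`, and the remaining `p - 2` powers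
give the fixed triples for `s = e_2`.
-/

noncomputable section

/-- The cycle of the permutation `σ` containing the point `x`, viewed as the set of points
in the same cycle as `x` (a fixed point gives a singleton cycle). -/
def cycOf {k : ℕ} (σ : Equiv.Perm (Fin k)) (x : Fin k) : Finset (Fin k) :=
  Finset.univ.filter fun y => σ.SameCycle x y

/-- The set `C(σ)` of cycles of `σ`, including fixed points: each cycle is recorded as the
set of its points, i.e. as an orbit of `σ`. -/
def cyclesOf {k : ℕ} (σ : Equiv.Perm (Fin k)) : Finset (Finset (Fin k)) :=
  Finset.image (cycOf σ) Finset.univ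

/-- The conditions of the Dołęga–Féray–Śniady theorem on a triple `(σ₁, σ₂, q)`:
(a) `σ₁ ∘ σ₂` is the long cycle `(1,2,…,k)`;
(b) the number of cycles of `σ₂` equals `Σᵢ sᵢ`;
(c) the total number of cycles of `σ₁` and `σ₂` equals `Σᵢ i·sᵢ`;
(d) the coloring `q : C(σ₂) → {2,3,…}` uses each color `i` exactly `sᵢ` times;
(e) for every nontrivial `A ⊆ C(σ₂)`, more than `Σ_{c∈A}(q(c)−1)` cycles of `σ₁`
    intersect `⋃ A`. -/
def KerovTripleCond {k : ℕ} (s : ℕ →₀ ℕ) (σ₁ σ₂ : Equiv.Perm (Fin k))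
    (q : {c // c ∈ cyclesOf σ₂} → ℕ) : Prop :=
  σ₁ * σ₂ = finRotate k ∧
  (cyclesOf σ₂).card = ∑ i ∈ s.support, s i ∧
  (cyclesOf σ₁).card + (cyclesOf σ₂).card = ∑ i ∈ s.support, i * s i ∧
  (∀ c, 2 ≤ q c) ∧
  (∀ i : ℕ, Nat.card {c // q c = i} = s i) ∧
  ∀ A : Finset {c // c ∈ cyclesOf σ₂}, A.Nonempty → A ≠ Finset.univ →
    ∑ c ∈ A, (q c - 1) <
      ((cyclesOf σ₁).filter fun o => ∃ c ∈ A, (o ∩ (c : Finset (Fin k))).Nonempty).card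

/-- `N_k(s)`: the number of triples `(σ₁, σ₂, q)` as in the Dołęga–Féray–Śniady theorem;
it equals the coefficient of `∏ᵢ Rᵢ^{sᵢ}` in the Kerov character polynomial `K_k`. -/
def Nkerov (k : ℕ) (s : ℕ →₀ ℕ) : ℕ :=
  Nat.card {T : Σ σ : Equiv.Perm (Fin k) × Equiv.Perm (Fin k),
      {c // c ∈ cyclesOf σ.2} → ℕ // KerovTripleCond s T.1.1 T.1.2 T.2}

open Equiv Equiv.Perm Finset MulAction

variable {k : ℕ}

section Cycles

variable {σ τ : Perm (Fin k)}

lemma mem_cycOf {x y : Fin k} : y ∈ cycOf σ x ↔ σ.SameCycle x y := by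
  simp [cycOf]

lemma cycOf_conj (x : Fin k) : cycOf (τ * σ * τ⁻¹) (τ x) = (cycOf σ x).image τ := by
  ext y
  simp only [mem_cycOf, sameCycle_conj, Finset.mem_image, coe_inv, symm_apply_apply]
  exact ⟨fun h => ⟨τ.symm y, h, τ.apply_symm_apply y⟩,
    fun ⟨z, hz, hzy⟩ => hzy ▸ by rwa [symm_apply_apply]⟩

lemma cyclesOf_conj : cyclesOf (τ * σ * τ⁻¹) = (cyclesOf σ).image (Finset.image τ) := by
  rw [cyclesOf, cyclesOf, Finset.image_image]
  conv_lhs => rw [← Finset.image_univ_equiv τ, Finset.image_image]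
  exact Finset.image_congr fun x _ => cycOf_conj x

lemma card_cyclesOf_conj : #(cyclesOf (τ * σ * τ⁻¹)) = #(cyclesOf σ) := by
  rw [cyclesOf_conj, Finset.card_image_of_injective _ (Finset.image_injective τ.injective)]

lemma card_cyclesOf_one : #(cyclesOf (1 : Perm (Fin k))) = k := by
  have hsingleton : cycOf (1 : Perm (Fin k)) = fun x => {x} := by
    ext x y
    simp [mem_cycOf, eq_comm]
  rw [cyclesOf, hsingleton, Finset.card_image_of_injective _ Finset.singleton_injective,
    Finset.card_univ, Fintype.card_fin]

lemma cyclesOf_nonempty_iff : (cyclesOf σ).Nonempty ↔ Nonempty (Fin k) := by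
  rw [cyclesOf, Finset.image_nonempty, Finset.univ_nonempty_iff]

lemma Equiv.Perm.IsCycle.cyclesOf_eq (hσ : σ.IsCycle) (hsupp : σ.support = univ) :
    cyclesOf σ = {univ} := by
  have hmoved (x : Fin k) : σ x ≠ x := mem_support.1 (hsupp ▸ mem_univ x)
  have hcyc (x : Fin k) : cycOf σ x = univ :=
    eq_univ_of_forall fun y => mem_cycOf.2 (hσ.sameCycle (hmoved x) (hmoved y))
  obtain ⟨x, -⟩ := hσ.nonempty_support
  have : Nonempty (Fin k) := ⟨x⟩
  rw [cyclesOf, Finset.image_congr fun x _ => hcyc x, Finset.image_const univ_nonempty]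

end Cycles

section Rotations

lemma commute_of_mem_zpowers {G : Type*} [Group G] {g x : G} (hx : x ∈ Subgroup.zpowers g) :
    Commute x g := by
  obtain ⟨n, rfl⟩ := Subgroup.mem_zpowers_iff.1 hx
  exact (Commute.refl g).zpow_left n

lemma orderOf_finRotate (hk : 2 ≤ k) : orderOf (finRotate k) = k := by
  rw [(isCycle_finRotate_of_le hk).orderOf, support_finRotate_of_le hk, card_univ,
    Fintype.card_fin]

lemma mem_zpowers_finRotate_of_commute (hk : 2 ≤ k) {g : Perm (Fin k)}
    (h : Commute g (finRotate k)) : g ∈ Subgroup.zpowers (finRotate k) := by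
  obtain ⟨_, hmem⟩ := (isCycle_finRotate_of_le hk).commute_iff.1 h
  rwa [ofSubtype_subtypePerm _ fun x _ => support_finRotate_of_le hk ▸ mem_univ x] at hmem

lemma cyclesOf_of_mem_zpowers_finRotate {p : ℕ} (hp : p.Prime) {g : Perm (Fin p)}
    (hg : g ∈ Subgroup.zpowers (finRotate p)) (hg1 : g ≠ 1) : cyclesOf g = {univ} := by
  have hc := isCycle_finRotate_of_le hp.two_le
  have hord := orderOf_finRotate hp.two_le
  obtain ⟨n, hn, rfl⟩ := Finset.mem_image.1 (mem_zpowers_iff_mem_range_orderOf.1 hg)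
  rw [Finset.mem_range] at hn
  have hn0 : 0 < n := Nat.pos_of_ne_zero fun h => hg1 (by rw [h, pow_zero])
  refine IsCycle.cyclesOf_eq (hc.isCycle_pow_pos_of_lt_prime_order (by rwa [hord]) n hn0 hn) ?_
  rw [hc.support_pow_of_pos_of_lt_orderOf hn0 hn, support_finRotate_of_le hp.two_le]

lemma card_cyclesOf_of_mem_zpowers_finRotate {p : ℕ} (hp : p.Prime) {g : Perm (Fin p)}
    (hg : g ∈ Subgroup.zpowers (finRotate p)) : #(cyclesOf g) = if g = 1 then p else 1 := by
  split_ifs with hg1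
  · rw [hg1, card_cyclesOf_one]
  · rw [cyclesOf_of_mem_zpowers_finRotate hp hg hg1, card_singleton]

end Rotations

lemma support_single_one (v : ℕ) : (Finsupp.single v 1 : ℕ →₀ ℕ).support = {v} :=
  Finsupp.support_single v one_ne_zero

lemma card_fiber_eq_single_of_subsingleton {X : Type*} [Subsingleton X] (f : X → ℕ) (x : X)
    (i : ℕ) : Nat.card {y // f y = i} = Finsupp.single (f x) 1 i := by
  rw [Finsupp.single_apply]
  split_ifs with hi
  · have : Unique {y // f y = i} := ⟨⟨⟨x, hi⟩⟩, fun y => Subtype.ext (Subsingleton.elim _ _)⟩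
    exact Nat.card_unique
  · have : IsEmpty {y // f y = i} := ⟨fun y => hi (Subsingleton.elim x y ▸ y.2)⟩
    exact Nat.card_of_isEmpty

namespace KerovTripleCond

variable {s : ℕ →₀ ℕ} {σ₁ σ₂ : Perm (Fin k)} {q : {c // c ∈ cyclesOf σ₂} → ℕ}

lemma apply_mem_support (h : KerovTripleCond s σ₁ σ₂ q) (c : {c // c ∈ cyclesOf σ₂}) :
    q c ∈ s.support := by
  have : Nonempty {c' // q c' = q c} := ⟨⟨c, rfl⟩⟩
  rw [Finsupp.mem_support_iff, ← h.2.2.2.2.1]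
  exact Nat.card_pos.ne'

lemma two_le_of_mem_support (h : KerovTripleCond s σ₁ σ₂ q) {i : ℕ} (hi : i ∈ s.support) :
    2 ≤ i := by
  rw [Finsupp.mem_support_iff, ← h.2.2.2.2.1, Ne, Nat.card_eq_zero, not_or, not_isEmpty_iff] at hi
  obtain ⟨⟨c, rfl⟩⟩ := hi.1
  exact h.2.2.2.1 c

/-- The identity has `k` cycles and the long cycle one, while every color is at least `2`. -/
lemma ne_one (h : KerovTripleCond s σ₁ σ₂ q) (hk : 2 ≤ k) : σ₂ ≠ 1 := by
  rintro rfl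
  obtain ⟨hmul, hcard₂, hcard, -⟩ := id h
  rw [mul_one] at hmul
  rw [hmul, (isCycle_finRotate_of_le hk).cyclesOf_eq (support_finRotate_of_le hk),
    card_singleton, card_cyclesOf_one] at hcard
  rw [card_cyclesOf_one] at hcard₂
  have : 2 * ∑ i ∈ s.support, s i ≤ ∑ i ∈ s.support, i * s i := by
    rw [Finset.mul_sum]
    exact Finset.sum_le_sum fun i hi => Nat.mul_le_mul_right _ (h.two_le_of_mem_support hi)
  omega

lemma eq_single (h : KerovTripleCond s σ₁ σ₂ q) (h₂ : #(cyclesOf σ₂) = 1) :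
    s = Finsupp.single (#(cyclesOf σ₁) + 1) 1 ∧ ∀ c, q c = #(cyclesOf σ₁) + 1 := by
  have : Subsingleton {c // c ∈ cyclesOf σ₂} := Finset.card_le_one_iff_subsingleton_coe.1 h₂.le
  have hs (c : {c // c ∈ cyclesOf σ₂}) : s = Finsupp.single (q c) 1 :=
    Finsupp.ext fun i => by rw [← h.2.2.2.2.1, card_fiber_eq_single_of_subsingleton q c]
  have hq (c : {c // c ∈ cyclesOf σ₂}) : q c = #(cyclesOf σ₁) + 1 := by
    have hcard := h.2.2.1
    rw [h₂, hs c, support_single_one, sum_singleton, Finsupp.single_eq_same, mul_one] at hcard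
    exact hcard.symm
  obtain ⟨c⟩ := (card_pos.1 (h₂ ▸ one_pos)).coe_sort
  exact ⟨hq c ▸ hs c, hq⟩

end KerovTripleCond

lemma kerovTripleCond_single {σ₁ σ₂ : Perm (Fin k)} (hmul : σ₁ * σ₂ = finRotate k)
    (h₂ : #(cyclesOf σ₂) = 1) :
    KerovTripleCond (Finsupp.single (#(cyclesOf σ₁) + 1) 1) σ₁ σ₂
      (fun _ => #(cyclesOf σ₁) + 1) := by
  have : Subsingleton {c // c ∈ cyclesOf σ₂} := Finset.card_le_one_iff_subsingleton_coe.1 h₂.le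
  obtain ⟨c⟩ := (card_pos.1 (h₂ ▸ one_pos)).coe_sort
  have hσ₁ : (cyclesOf σ₁).Nonempty := cyclesOf_nonempty_iff.2 (cyclesOf_nonempty_iff.1 ⟨c.1, c.2⟩)
  refine ⟨hmul, ?_, ?_, fun _ => Nat.succ_le_succ hσ₁.card_pos,
    card_fiber_eq_single_of_subsingleton _ c, ?_⟩
  · rw [h₂, support_single_one, sum_singleton, Finsupp.single_eq_same]
  · rw [h₂, support_single_one, sum_singleton, Finsupp.single_eq_same, mul_one]
  · rintro A ⟨a, ha⟩ hA
    exact absurd (eq_univ_of_forall fun b => Subsingleton.elim a b ▸ ha) hA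

section Conjugation

variable {τ : Perm (Fin k)}

def cyclesConjEquiv (τ σ : Perm (Fin k)) :
    {d // d ∈ cyclesOf σ} ≃ {d // d ∈ cyclesOf (τ * σ * τ⁻¹)} where
  toFun d := ⟨d.1.image τ, cyclesOf_conj ▸ mem_image_of_mem _ d.2⟩
  invFun e := ⟨e.1.image (τ⁻¹ : Perm (Fin k)), by
    obtain ⟨d, hd, hde⟩ := mem_image.1 (cyclesOf_conj.subset e.2)
    simpa [← hde, image_image] using hd⟩
  left_inv d := Subtype.ext (by simp [image_image])
  right_inv e := Subtype.ext (by simp [image_image])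

lemma cyclesConjEquiv_symm_apply_coe (σ : Perm (Fin k)) (e : {d // d ∈ cyclesOf (τ * σ * τ⁻¹)}) :
    ((cyclesConjEquiv τ σ).symm e : Finset (Fin k)) = e.1.image (τ⁻¹ : Perm (Fin k)) := rfl

lemma card_filter_cyclesOf_conj (σ₁ σ₂ : Perm (Fin k)) (A : Finset {d // d ∈ cyclesOf σ₂}) :
    #((cyclesOf (τ * σ₁ * τ⁻¹)).filter fun o =>
        ∃ e ∈ A.map (cyclesConjEquiv τ σ₂).toEmbedding, (o ∩ (e : Finset (Fin k))).Nonempty) =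
      #((cyclesOf σ₁).filter fun o => ∃ d ∈ A, (o ∩ (d : Finset (Fin k))).Nonempty) := by
  rw [cyclesOf_conj (σ := σ₁), filter_image,
    card_image_of_injective _ (image_injective τ.injective)]
  congr 1
  refine filter_congr fun o _ => ?_
  simp only [mem_map, exists_exists_and_eq_and, Equiv.coe_toEmbedding, cyclesConjEquiv,
    Equiv.coe_fn_mk, ← image_inter _ _ τ.injective, image_nonempty]

lemma KerovTripleCond.conj {s : ℕ →₀ ℕ} {σ₁ σ₂ : Perm (Fin k)} {q : {c // c ∈ cyclesOf σ₂} → ℕ}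
    (hτ : Commute τ (finRotate k)) (h : KerovTripleCond s σ₁ σ₂ q) :
    KerovTripleCond s (τ * σ₁ * τ⁻¹) (τ * σ₂ * τ⁻¹) (q ∘ (cyclesConjEquiv τ σ₂).symm) := by
  obtain ⟨hmul, hcard₂, hcard, hq, hcolor, hconn⟩ := h
  refine ⟨?_, ?_, ?_, fun e => hq _, fun i => ?_, fun A hA hAuniv => ?_⟩
  · rw [show τ * σ₁ * τ⁻¹ * (τ * σ₂ * τ⁻¹) = τ * (σ₁ * σ₂) * τ⁻¹ by group, hmul, hτ.eq,
      mul_inv_cancel_right]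
  · rw [card_cyclesOf_conj, hcard₂]
  · rw [card_cyclesOf_conj, card_cyclesOf_conj, hcard]
  · rw [← hcolor i]
    exact Nat.card_congr ((cyclesConjEquiv τ σ₂).symm.subtypeEquiv fun _ => Iff.rfl)
  · set E := cyclesConjEquiv τ σ₂
    obtain ⟨B, rfl⟩ : ∃ B, A = B.map E.toEmbedding := ⟨A.map E.symm.toEmbedding, by simp [map_map]⟩
    have hB : B ≠ univ := fun hB => hAuniv (hB ▸ map_univ_equiv E)
    rw [card_filter_cyclesOf_conj, sum_map]
    simpa using hconn B (map_nonempty.1 hA) hB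

end Conjugation

abbrev KerovTriple (k : ℕ) (s : ℕ →₀ ℕ) :=
  {T : Σ σ : Perm (Fin k) × Perm (Fin k), {c // c ∈ cyclesOf σ.2} → ℕ //
    KerovTripleCond s T.1.1 T.1.2 T.2}

lemma nkerov_eq_card (k : ℕ) (s : ℕ →₀ ℕ) : Nkerov k s = Nat.card (KerovTriple k s) := rfl

namespace KerovTriple

variable {s : ℕ →₀ ℕ}

lemma ext : ∀ {t t' : KerovTriple k s}, t.1.1 = t'.1.1 →
    (∀ d (hd : d ∈ cyclesOf t.1.1.2) (hd' : d ∈ cyclesOf t'.1.1.2),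
      t.1.2 ⟨d, hd⟩ = t'.1.2 ⟨d, hd'⟩) → t = t'
  | ⟨⟨σ, q⟩, _⟩, ⟨⟨_, q'⟩, _⟩, rfl, hq => by
    congr
    exact funext fun d => hq d.1 d.2 d.2

instance : Finite (KerovTriple k s) := by
  refine Finite.of_injective
    (β := Σ σ : Perm (Fin k) × Perm (Fin k), {c // c ∈ cyclesOf σ.2} → s.support)
    (fun t => ⟨t.1.1, fun c => ⟨t.1.2 c, t.2.apply_mem_support c⟩⟩) ?_
  rintro ⟨⟨σ, q⟩, _⟩ ⟨⟨σ', q'⟩, _⟩ h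
  obtain ⟨rfl, h⟩ := Sigma.mk.inj_iff.1 h
  exact ext rfl fun d hd _ => congrArg Subtype.val (congrFun (eq_of_heq h) ⟨d, hd⟩)

instance : SMul (Subgroup.zpowers (finRotate k)) (KerovTriple k s) where
  smul g t := ⟨⟨(g * t.1.1.1 * g⁻¹, g * t.1.1.2 * g⁻¹),
      t.1.2 ∘ (cyclesConjEquiv (g : Perm (Fin k)) t.1.1.2).symm⟩,
    t.2.conj (commute_of_mem_zpowers g.2)⟩

lemma smul_fst (g : Subgroup.zpowers (finRotate k)) (t : KerovTriple k s) :
    (g • t).1.1 = (g * t.1.1.1 * g⁻¹, g * t.1.1.2 * g⁻¹) := rfl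

lemma smul_snd (g : Subgroup.zpowers (finRotate k)) (t : KerovTriple k s) (e) :
    (g • t).1.2 e = t.1.2 ((cyclesConjEquiv (g : Perm (Fin k)) t.1.1.2).symm e) := rfl

instance : MulAction (Subgroup.zpowers (finRotate k)) (KerovTriple k s) where
  one_smul t := ext (by simp [smul_fst]) fun d _ _ => by
    rw [smul_snd]
    exact congrArg t.1.2 (Subtype.ext (by simp [cyclesConjEquiv_symm_apply_coe]))
  mul_smul g g' t := ext (by simp [smul_fst, mul_assoc]) fun d _ _ => by
    rw [smul_snd, smul_snd, smul_snd]
    exact congrArg t.1.2 (Subtype.ext (by simp [cyclesConjEquiv_symm_apply_coe, image_image]))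

lemma fst_fst_eq_finRotate_mul_inv (t : KerovTriple k s) :
    t.1.1.1 = finRotate k * t.1.1.2⁻¹ :=
  eq_mul_inv_of_mul_eq t.2.1

lemma eq_of_snd_eq {t t' : KerovTriple k s} (h₂ : #(cyclesOf t.1.1.2) = 1)
    (h : t.1.1.2 = t'.1.1.2) : t = t' := by
  have h₁ : t.1.1.1 = t'.1.1.1 := by
    rw [fst_fst_eq_finRotate_mul_inv, fst_fst_eq_finRotate_mul_inv, h]
  refine ext (Prod.ext h₁ h) fun d hd hd' => ?_
  rw [(t.2.eq_single h₂).2, (t'.2.eq_single (h ▸ h₂)).2, h₁]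

lemma mem_fixedPoints_iff {t : KerovTriple k s} :
    t ∈ fixedPoints (Subgroup.zpowers (finRotate k)) (KerovTriple k s) ↔
      (⟨finRotate k, Subgroup.mem_zpowers _⟩ : Subgroup.zpowers (finRotate k)) • t = t := by
  refine ⟨fun h => h _, fun h g => ?_⟩
  obtain ⟨n, hn⟩ := Subgroup.mem_zpowers_iff.1 g.2
  obtain rfl : (⟨finRotate k, Subgroup.mem_zpowers _⟩ ^ n : Subgroup.zpowers (finRotate k)) = g :=
    Subtype.ext hn
  exact (zpow_mem (mem_stabilizer_iff.2 h) n : _ ∈ stabilizer _ t)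

lemma mem_fixedPoints_of_commute {t : KerovTriple k s} (h₁ : Commute t.1.1.1 (finRotate k))
    (h₂ : Commute t.1.1.2 (finRotate k)) (hq : ∀ c c', t.1.2 c = t.1.2 c') :
    t ∈ fixedPoints (Subgroup.zpowers (finRotate k)) (KerovTriple k s) := by
  refine mem_fixedPoints_iff.2 (ext ((smul_fst _ t).trans (Prod.ext ?_ ?_)) fun _ _ _ => hq _ _)
  · show finRotate k * _ * (finRotate k)⁻¹ = _
    rw [← h₁.eq, mul_inv_cancel_right]
  · show finRotate k * _ * (finRotate k)⁻¹ = _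
    rw [← h₂.eq, mul_inv_cancel_right]

lemma snd_mem_zpowers_of_mem_fixedPoints (hk : 2 ≤ k) {t : KerovTriple k s}
    (ht : t ∈ fixedPoints (Subgroup.zpowers (finRotate k)) (KerovTriple k s)) :
    t.1.1.2 ∈ Subgroup.zpowers (finRotate k) := by
  have hconj := congrArg Prod.snd (congrArg (fun t => t.1.1) (mem_fixedPoints_iff.1 ht))
  exact mem_zpowers_finRotate_of_commute hk (mul_inv_eq_iff_eq_mul.1 hconj).symm

end KerovTriple

section FixedPoints

open KerovTriple

variable {p : ℕ} {s : ℕ →₀ ℕ}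

lemma card_fixedPoints_eq_ncard (hp : p.Prime) :
    Nat.card (fixedPoints (Subgroup.zpowers (finRotate p)) (KerovTriple p s)) =
      {g | g ∈ Subgroup.zpowers (finRotate p) ∧ g ≠ 1 ∧
        s = Finsupp.single (#(cyclesOf (finRotate p * g⁻¹)) + 1) 1}.ncard := by
  have hcard {g : Perm (Fin p)} (hg : g ∈ Subgroup.zpowers (finRotate p)) (hg1 : g ≠ 1) :
      #(cyclesOf g) = 1 := by
    rw [card_cyclesOf_of_mem_zpowers_finRotate hp hg, if_neg hg1]
  have hsnd {t : KerovTriple p s} (ht : t ∈ fixedPoints _ _) :=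
    snd_mem_zpowers_of_mem_fixedPoints hp.two_le ht
  have hcard_snd (t : fixedPoints (Subgroup.zpowers (finRotate p)) (KerovTriple p s)) :=
    hcard (hsnd t.2) (t.1.2.ne_one hp.two_le)
  rw [← Nat.card_coe_set_eq]
  refine Nat.card_eq_of_bijective (fun t => ⟨t.1.1.1.2, hsnd t.2, t.1.2.ne_one hp.two_le,
      fst_fst_eq_finRotate_mul_inv t.1 ▸ (t.1.2.eq_single (hcard_snd t)).1⟩)
    ⟨fun t t' h => Subtype.ext (eq_of_snd_eq (hcard_snd t) (congrArg Subtype.val h)), ?_⟩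
  rintro ⟨g, hg, hg1, hs⟩
  have hc : Commute g (finRotate p) := commute_of_mem_zpowers hg
  let t : KerovTriple p s :=
    ⟨⟨(finRotate p * g⁻¹, g), fun _ => #(cyclesOf (finRotate p * g⁻¹)) + 1⟩,
      hs ▸ kerovTripleCond_single (inv_mul_cancel_right _ _) (hcard hg hg1)⟩
  exact ⟨⟨t, mem_fixedPoints_of_commute ((Commute.refl _).mul_left hc.inv_left) hc
    fun _ _ => rfl⟩, rfl⟩

end FixedPoints

lemma ncard_setOf_mem_zpowers_finRotate {p : ℕ} (hp : p.Prime) (s : ℕ →₀ ℕ) :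
    {g | g ∈ Subgroup.zpowers (finRotate p) ∧ g ≠ 1 ∧
        s = Finsupp.single (#(cyclesOf (finRotate p * g⁻¹)) + 1) 1}.ncard =
      (if s = Finsupp.single (p + 1) 1 then 1 else 0) +
        (if s = Finsupp.single 2 1 then p - 2 else 0) := by
  set c := finRotate p
  have hc1 : c ≠ 1 := (isCycle_finRotate_of_le hp.two_le).ne_one
  have hv {g : Perm (Fin p)} (hg : g ∈ Subgroup.zpowers c) :
      #(cyclesOf (c * g⁻¹)) + 1 = if g = c then p + 1 else 2 := by
    rw [card_cyclesOf_of_mem_zpowers_finRotate hp (mul_mem (Subgroup.mem_zpowers c) (inv_mem hg))]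
    by_cases h : g = c
    · simp [h]
    · simp [h, mul_inv_eq_one, Ne.symm h]
  have hsingle (a b : ℕ) : (Finsupp.single a 1 : ℕ →₀ ℕ) = Finsupp.single b 1 ↔ a = b :=
    Finsupp.single_left_inj one_ne_zero
  have h2p : p + 1 ≠ 2 := by have := hp.two_le; omega
  have hS : {g | g ∈ Subgroup.zpowers c ∧ g ≠ 1 ∧
      s = Finsupp.single (#(cyclesOf (c * g⁻¹)) + 1) 1} =
      {g | g ∈ Subgroup.zpowers c ∧ g ≠ 1 ∧ s = Finsupp.single (if g = c then p + 1 else 2) 1} :=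
    Set.ext fun g => and_congr_right fun hg => by rw [hv hg]
  rw [hS]
  by_cases h₁ : s = Finsupp.single (p + 1) 1
  · trans ({c} : Set (Perm (Fin p))).ncard
    · congr 1
      ext g
      by_cases h : g = c <;> simp [h, h₁, hsingle, hc1, h2p]
    · rw [Set.ncard_singleton, if_pos h₁, if_neg (by rw [h₁, hsingle]; exact h2p)]
  by_cases h₂ : s = Finsupp.single 2 1
  · trans ((Subgroup.zpowers c : Set (Perm (Fin p))) \ {1, c}).ncard
    · congr 1
      ext g
      by_cases h : g = c <;> simp [h, h₂, hsingle, hp.ne_one]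
    · rw [Set.ncard_sdiff (by simp [Set.insert_subset_iff, Subgroup.mem_zpowers]),
        Set.ncard_pair hc1.symm, ← Nat.card_coe_set_eq, SetLike.coe_sort_coe, Nat.card_zpowers,
        orderOf_finRotate hp.two_le, if_neg h₁, if_pos h₂, zero_add]
  · trans (∅ : Set (Perm (Fin p))).ncard
    · congr 1
      ext g
      by_cases h : g = c <;> simp [h, h₁, h₂]
    · rw [Set.ncard_empty, if_neg h₁, if_neg h₂]

lemma card_fixedPoints_kerovTriple {p : ℕ} (hp : p.Prime) (s : ℕ →₀ ℕ) :
    Nat.card (fixedPoints (Subgroup.zpowers (finRotate p)) (KerovTriple p s)) =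
      (if s = Finsupp.single (p + 1) 1 then 1 else 0) +
        (if s = Finsupp.single 2 1 then p - 2 else 0) := by
  rw [card_fixedPoints_eq_ncard hp, ncard_setOf_mem_zpowers_finRotate hp]

lemma isPGroup_zpowers_finRotate {p : ℕ} (hp : p.Prime) :
    IsPGroup p (Subgroup.zpowers (finRotate p)) :=
  IsPGroup.of_card (n := 1) (by rw [Nat.card_zpowers, orderOf_finRotate hp.two_le, pow_one])

theorem gal_divisibility_Sigma_p_general (p : ℕ) (hp : p.Prime)
    (s : ℕ →₀ ℕ) :
    ∃ m : ℕ, (Nkerov p s : ℤ)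
        - (if s = Finsupp.single (p + 1) 1 then 1 else 0)
        + 2 * (if s = Finsupp.single 2 1 then 1 else 0) = (p : ℤ) * (m : ℤ) := by
  have : Fact p.Prime := ⟨hp⟩
  have hle := Finite.card_subtype_le
    (· ∈ fixedPoints (Subgroup.zpowers (finRotate p)) (KerovTriple p s))
  obtain ⟨m, hm⟩ := (Nat.modEq_iff_dvd' hle).1
    ((isPGroup_zpowers_finRotate hp).card_modEq_card_fixedPoints _).symm
  rw [card_fixedPoints_kerovTriple hp] at hm hle
  refine ⟨m + if s = Finsupp.single 2 1 then 1 else 0, ?_⟩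
  rw [nkerov_eq_card]
  split_ifs at hm hle ⊢ <;> zify [hle, hp.two_le] at hm ⊢ <;> linear_combination hm

/-- Lemma 3.3, first expression: for `p` an odd prime,
`(Σ_p − R_{p+1} + 2R_2)/p` is a polynomial in the free cumulants with nonnegative integer
coefficients: for every finitely supported `s : {2,3,…} → ℕ`, the integer
`N_p(s) − [s = e_{p+1}] + 2·[s = e_2]` is nonnegative and divisible by `p`. -/
theorem gal_divisibility_Sigma_p (p : ℕ) (hp : p.Prime) (hodd : Odd p)
    (s : ℕ →₀ ℕ) (hs : ∀ i ∈ s.support, 2 ≤ i) :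
    ∃ m : ℕ, (Nkerov p s : ℤ)
        - (if s = Finsupp.single (p + 1) 1 then 1 else 0)
        + 2 * (if s = Finsupp.single 2 1 then 1 else 0) = (p : ℤ) * (m : ℤ) :=
  gal_divisibility_Sigma_p_general p hp s

end
end
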